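/- Let β₁, β₂, β₃, β₄ be vectors such that P = {∑_{j=1}^4 ε_j β_j : ε_j ∈ {±1}} is an admissible subsystem of roots with 16 elements, normalized so that the maximal norm of elements of P is 1. Then (up to permutation and sign changes) the Gram matrix (⟨β_i,β_j⟩) equals (1/4)·Id₄; the minimal root system P̄ containing P is isometric to the root system of so(8), and P̄ \ P is the root system of so(4) ⊕ so(4). -/

import Mathlib

/-!
Write `v_ε = ∑ ε_j β_j`. By integrality and `‖·‖ ≤ 1`, the inner product of a unit vector
`u ∈ P` with any `w ∈ P` other than `-u` is at least `-1/2`. For `u = v_ε` and `w` the vector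
with all signs but the `k`-th flipped this reads `ε_k ⟪u, β_k⟫ ≥ 1/4`; these four numbers sum to
`‖u‖² = 1`, so all of them equal `1/4`.

After changing signs, `v = ∑ β_j` is a unit vector. Reflecting `v - 2β_j` in `v` gives the root
`-2β_j ∈ P̄ \ P`. Since `P̄ \ P` is closed under its own reflections, these reflections preserve
`P`, so `v - β_j / (2 ⟪β_j, β_j⟫)` is a unit vector of `P`. Its inner products `±1/4` with the
`β_k` force `⟪β_j, β_k⟫ ∈ {0, ⟪β_j, β_j⟫}`, and a nonzero off-diagonal entry would give
`β_j = β_k`. So the Gram matrix is `Id / 4`, and then `P ∪ {±2β_i}` (a root system of type `D₄`)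
is closed under its own reflections, which determines `P̄`.
-/

open RealInnerProductSpace

variable {V : Type*} [NormedAddCommGroup V] [InnerProductSpace ℝ V]

/-- A root system in a Euclidean space, without the spanning condition. -/
def IsRootSet (R : Set V) : Prop :=
  R.Finite ∧ (0 : V) ∉ R ∧
  (∀ α ∈ R, ∀ t : ℝ, t • α ∈ R → t = 1 ∨ t = -1) ∧
  (∀ α ∈ R, ∀ β ∈ R, ∃ n : ℤ, 2 * ⟪α, β⟫ / ⟪α, α⟫ = (n : ℝ)) ∧
  (∀ α ∈ R, ∀ v ∈ R, v - (2 * ⟪α, v⟫ / ⟪α, α⟫) • α ∈ R)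

def IsRootSystem (R : Set V) : Prop :=
  IsRootSet R ∧ Submodule.span ℝ R = ⊤

def IsSubsystem (P : Set V) : Prop :=
  Submodule.span ℝ P = ⊤ ∧ ∃ R : Set V, IsRootSystem R ∧ P ⊆ R

/-- Membership in `P̄`, the minimal root system containing `P`. -/
inductive ReflClosure (P : Set V) : V → Prop
  | base : ∀ v ∈ P, ReflClosure P v
  | refl : ∀ α v, ReflClosure P α → ReflClosure P v →
      ReflClosure P (v - (2 * ⟪α, v⟫ / ⟪α, α⟫) • α)

/-- `P̄ \ P` is only required to be a root system in the subspace it spans. -/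
def IsAdmissible (P : Set V) : Prop :=
  IsSubsystem P ∧ IsRootSet ({v | ReflClosure P v} \ P)

open Finset Function

noncomputable def reflect (α v : V) : V := v - (2 * ⟪α, v⟫ / ⟪α, α⟫) • α

section Reflection

variable {α v : V}

lemma reflect_neg_left (α v : V) : reflect (-α) v = reflect α v := by
  simp only [reflect, inner_neg_left, inner_neg_right, neg_neg, smul_neg, neg_div, mul_neg,
    neg_smul]

lemma reflect_neg_right (α v : V) : reflect α (-v) = -reflect α v := by
  simp only [reflect, inner_neg_right, mul_neg, neg_div, neg_smul, neg_sub', sub_neg_eq_add]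

lemma reflect_of_inner_self_eq_one (h : ⟪α, α⟫ = 1) (v : V) :
    reflect α v = v - (2 * ⟪α, v⟫) • α := by
  rw [reflect, h, div_one]

lemma reflect_of_inner_eq_zero (h : ⟪α, v⟫ = 0) : reflect α v = v := by
  simp [reflect, h]

lemma reflect_self (hα : α ≠ 0) : reflect α α = -α := by
  rw [reflect, mul_div_assoc, div_self ((inner_self_ne_zero (𝕜 := ℝ)).mpr hα)]
  module

lemma inner_reflect_right (hα : α ≠ 0) (v : V) : ⟪α, reflect α v⟫ = -⟪α, v⟫ := by
  have := (inner_self_ne_zero (𝕜 := ℝ)).mpr hα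
  rw [reflect, inner_sub_right, real_inner_smul_right]
  field_simp
  ring

lemma reflect_reflect (hα : α ≠ 0) (v : V) : reflect α (reflect α v) = v := by
  rw [reflect, inner_reflect_right hα, reflect]
  module

lemma norm_reflect (hα : α ≠ 0) (v : V) : ‖reflect α v‖ = ‖v‖ := by
  have := (inner_self_ne_zero (𝕜 := ℝ)).mpr hα
  rw [← sq_eq_sq₀ (norm_nonneg _) (norm_nonneg _), ← real_inner_self_eq_norm_sq,
    ← real_inner_self_eq_norm_sq, reflect, real_inner_sub_sub_self]
  simp only [real_inner_smul_left, real_inner_smul_right, real_inner_comm v α]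
  field_simp
  ring

end Reflection

section Admissible

variable {P : Set V} {u x p : V}

lemma ReflClosure.reflect {α v : V} (hα : ReflClosure P α) (hv : ReflClosure P v) :
    ReflClosure P (reflect α v) :=
  ReflClosure.refl α v hα hv

lemma ReflClosure.neg (hu : ReflClosure P u) (hu0 : u ≠ 0) : ReflClosure P (-u) :=
  reflect_self hu0 ▸ hu.reflect hu

lemma IsSubsystem.zero_notMem (hP : IsSubsystem P) : (0 : V) ∉ P := by
  obtain ⟨-, R, ⟨⟨-, hR0, -⟩, -⟩, hPR⟩ := hP
  exact fun h => hR0 (hPR h)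

lemma IsSubsystem.eq_one_or_eq_neg_one_of_smul_mem (hP : IsSubsystem P) (hu : u ∈ P) {t : ℝ}
    (ht : t • u ∈ P) : t = 1 ∨ t = -1 := by
  obtain ⟨-, R, ⟨⟨-, -, hRmul, -⟩, -⟩, hPR⟩ := hP
  exact hRmul u (hPR hu) t (hPR ht)

lemma IsSubsystem.exists_int {w : V} (hP : IsSubsystem P) (hu : u ∈ P) (hw : w ∈ P) :
    ∃ n : ℤ, 2 * ⟪u, w⟫ / ⟪u, u⟫ = n := by
  obtain ⟨-, R, ⟨⟨-, -, -, hRint, -⟩, -⟩, hPR⟩ := hP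
  exact hRint u (hPR hu) w (hPR hw)

/-- Otherwise `p`, the image of `reflect x p` under the same reflection, would lie in the root
system `P̄ \ P`. -/
lemma IsAdmissible.reflect_mem (hP : IsAdmissible P) (hx : ReflClosure P x) (hxP : x ∉ P)
    (hp : p ∈ P) : reflect x p ∈ P := by
  obtain ⟨-, -, h0, -, -, hcl⟩ := hP
  have hx0 : x ≠ 0 := by rintro rfl; exact h0 ⟨hx, hxP⟩
  by_contra hq
  have : reflect x (reflect x p) ∈ {v | ReflClosure P v} \ P :=
    hcl x ⟨hx, hxP⟩ _ ⟨hx.reflect (ReflClosure.base p hp), hq⟩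
  exact (reflect_reflect hx0 p ▸ this).2 hp

end Admissible

section SignedSums

variable {ι : Type*}

def IsSignVector (ε : ι → ℝ) : Prop := ∀ j, ε j = 1 ∨ ε j = -1

namespace IsSignVector

variable {ε a c : ι → ℝ}

lemma mul_self (hε : IsSignVector ε) (j : ι) : ε j * ε j = 1 := by
  rcases hε j with h | h <;> simp [h]

lemma ne_zero (hε : IsSignVector ε) (j : ι) : ε j ≠ 0 := by
  rcases hε j with h | h <;> simp [h]

lemma one : IsSignVector (1 : ι → ℝ) := fun _ => Or.inl rfl

lemma neg (hε : IsSignVector ε) : IsSignVector (-ε) := fun j => by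
  rcases hε j with h | h <;> simp [h]

lemma mul (ha : IsSignVector a) (hc : IsSignVector c) : IsSignVector (a * c) := fun j => by
  rcases ha j with h | h <;> rcases hc j with h' | h' <;> simp [h, h']

lemma update_neg [DecidableEq ι] (hε : IsSignVector ε) (j : ι) :
    IsSignVector (update ε j (-ε j)) := fun k => by
  rcases eq_or_ne k j with rfl | hk
  · rcases hε k with h | h <;> simp [h]
  · rw [update_of_ne hk]; exact hε k

/-- Each term `1 - a j * c j` is `0` or `2`, so exactly one of them is nonzero. -/
lemma exists_eq_update_neg [Fintype ι] [DecidableEq ι] (ha : IsSignVector a) (hc : IsSignVector c)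
    (h : ∑ j, a j * c j = Fintype.card ι - 2) : ∃ i, c = update a i (-a i) := by
  have hterm : ∀ j, 1 - a j * c j = 0 ∨ 1 - a j * c j = 2 := fun j => by
    rcases ha j with h | h <;> rcases hc j with h' | h' <;> norm_num [h, h']
  have hsum : ∑ j, (1 - a j * c j) = 2 := by
    rw [sum_sub_distrib, h, sum_const, card_univ, nsmul_eq_mul, mul_one]; ring
  obtain ⟨i, -, hi⟩ := exists_ne_zero_of_sum_ne_zero (hsum.trans_ne two_ne_zero)
  have hi2 : 1 - a i * c i = 2 := (hterm i).resolve_left hi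
  have hrest : ∀ j ∈ univ.erase i, 1 - a j * c j = 0 := by
    refine (sum_eq_zero_iff_of_nonneg fun j _ => ?_).mp ?_
    · rcases hterm j with h | h <;> norm_num [h]
    · linarith [sum_erase_add univ (fun j => 1 - a j * c j) (mem_univ i)]
  refine ⟨i, funext fun j => ?_⟩
  rcases eq_or_ne j i with rfl | hj
  · rw [update_self]
    linear_combination (-a j) * hi2 - c j * ha.mul_self j
  · rw [update_of_ne hj]
    linear_combination (-a j) * hrest j (mem_erase.mpr ⟨hj, mem_univ j⟩) - c j * ha.mul_self j

end IsSignVector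

variable [Fintype ι] (β : ι → V)

def signedSum (ε : ι → ℝ) : V := ∑ j, ε j • β j

def signedSums : Set V := {v | ∃ ε : ι → ℝ, IsSignVector ε ∧ v = signedSum β ε}

variable {β} {ε : ι → ℝ}

lemma signedSum_mem_signedSums (hε : IsSignVector ε) : signedSum β ε ∈ signedSums β :=
  ⟨ε, hε, rfl⟩

lemma signedSum_neg (ε : ι → ℝ) : signedSum β (-ε) = -signedSum β ε := by
  simp [signedSum, neg_smul, sum_neg_distrib]

lemma signedSum_update_neg [DecidableEq ι] (ε : ι → ℝ) (j : ι) :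
    signedSum β (update ε j (-ε j)) = signedSum β ε - (2 * ε j) • β j := by
  simp only [signedSum, ← sum_erase_add univ _ (mem_univ j), update_self]
  rw [sum_congr rfl fun k hk => by rw [update_of_ne (ne_of_mem_erase hk)]]
  module

lemma neg_mem_signedSums {u : V} (hu : u ∈ signedSums β) : -u ∈ signedSums β := by
  obtain ⟨ε, hε, rfl⟩ := hu
  exact ⟨-ε, hε.neg, (signedSum_neg ε).symm⟩

lemma signedSum_smul (s ε : ι → ℝ) : signedSum (s • β) ε = signedSum β (ε * s) := by
  simp [signedSum, smul_smul]

lemma signedSums_smul {s : ι → ℝ} (hs : IsSignVector s) : signedSums (s • β) = signedSums β := by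
  ext u
  constructor
  · rintro ⟨ε, hε, rfl⟩
    exact ⟨ε * s, hε.mul hs, signedSum_smul s ε⟩
  · rintro ⟨ε, hε, rfl⟩
    refine ⟨ε * s, hε.mul hs, ?_⟩
    rw [signedSum_smul, mul_assoc, show s * s = 1 from funext hs.mul_self, mul_one]

lemma inner_signedSum_right (x : V) (ε : ι → ℝ) :
    ⟪x, signedSum β ε⟫ = ∑ j, ε j * ⟪x, β j⟫ := by
  simp only [signedSum, inner_sum, real_inner_smul_right]

lemma injOn_signedSum (h : (signedSums β).ncard = 2 ^ Fintype.card ι) :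
    Set.InjOn (signedSum β) {ε | IsSignVector ε} := by
  classical
  let signs := Fintype.piFinset fun _ : ι => ({1, -1} : Finset ℝ)
  have hsigns : (signs : Set (ι → ℝ)) = {ε | IsSignVector ε} := by
    ext ε; simp [signs, IsSignVector]
  have himage : signedSum β '' {ε | IsSignVector ε} = signedSums β := by
    ext u; simp only [signedSums, Set.mem_image, Set.mem_ofPred_eq, eq_comm (a := u)]
  refine Set.injOn_of_ncard_image_eq ?_ (hsigns ▸ signs.finite_toSet)
  rw [himage, h, ← hsigns, Set.ncard_coe_finset, Fintype.card_piFinset, prod_const,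
    card_pair (by norm_num), card_univ]

end SignedSums

lemma neg_half_le_inner {u w : V} (hu : ‖u‖ = 1) (hw : ‖w‖ ≤ 1) (hne : w ≠ -u)
    (hint : ∃ n : ℤ, 2 * ⟪u, w⟫ / ⟪u, u⟫ = n) : -1 / 2 ≤ ⟪u, w⟫ := by
  obtain ⟨n, hn⟩ := hint
  rw [real_inner_self_eq_norm_sq, hu, one_pow, div_one] at hn
  by_contra! hlt
  have hn2 : (n : ℝ) ≤ -2 := by
    have : n < -1 := by exact_mod_cast (show (n : ℝ) < -1 by linarith)
    exact_mod_cast (show n ≤ -2 by omega)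
  have hsum : ‖u + w‖ ^ 2 ≤ 0 := by
    rw [← real_inner_self_eq_norm_sq, real_inner_add_add_self, real_inner_self_eq_norm_sq,
      real_inner_self_eq_norm_sq, hu]
    nlinarith [norm_nonneg w]
  have : u + w = 0 := norm_eq_zero.mp (by nlinarith [norm_nonneg (u + w)])
  exact hne (eq_neg_of_add_eq_zero_right this)

section Gram

variable {ι : Type*} [Fintype ι] [DecidableEq ι] {β : ι → V}

/-- Pair a unit vector `u = ∑ εⱼ βⱼ` of `P` with the sum having all signs but the `k`-th
flipped: their inner product is `2 εₖ ⟪u, βₖ⟫ - 1`, and it is at least `-1/2`. -/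
lemma quarter_le_mul_inner_signedSum (hP : IsSubsystem (signedSums β))
    (hinj : Set.InjOn (signedSum β) {ε | IsSignVector ε})
    (hle : ∀ u ∈ signedSums β, ‖u‖ ≤ 1) {ε : ι → ℝ} (hε : IsSignVector ε)
    (h1 : ‖signedSum β ε‖ = 1) (k : ι) : 1 / 4 ≤ ε k * ⟪signedSum β ε, β k⟫ := by
  set ε' := update (-ε) k (-(-ε) k)
  have hε' : IsSignVector ε' := hε.neg.update_neg k
  have hw : signedSum β ε' = (2 * ε k) • β k - signedSum β ε := by
    rw [signedSum_update_neg, signedSum_neg, Pi.neg_apply]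
    module
  have hne : signedSum β ε' ≠ -signedSum β ε := fun h => by
    have hk := congrFun (hinj hε' hε.neg (h.trans (signedSum_neg ε).symm)) k
    simp only [ε', update_self, Pi.neg_apply, neg_neg] at hk
    exact hε.ne_zero k (by linarith)
  have := neg_half_le_inner h1 (hle _ (signedSum_mem_signedSums hε')) hne
    (hP.exists_int (signedSum_mem_signedSums hε) (signedSum_mem_signedSums hε'))
  rw [hw, inner_sub_right, real_inner_smul_right, real_inner_self_eq_norm_sq, h1] at this
  linarith

lemma mul_inner_signedSum_eq (hι : Fintype.card ι = 4) (hP : IsSubsystem (signedSums β))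
    (hinj : Set.InjOn (signedSum β) {ε | IsSignVector ε})
    (hle : ∀ u ∈ signedSums β, ‖u‖ ≤ 1) {ε : ι → ℝ} (hε : IsSignVector ε)
    (h1 : ‖signedSum β ε‖ = 1) (k : ι) : ε k * ⟪signedSum β ε, β k⟫ = 1 / 4 := by
  have hsum : ∑ _j : ι, (1 / 4 : ℝ) = ∑ j, ε j * ⟪signedSum β ε, β j⟫ := by
    rw [← inner_signedSum_right, real_inner_self_eq_norm_sq, h1, sum_const, card_univ, hι]
    norm_num
  exact ((sum_eq_sum_iff_of_le fun j _ =>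
    quarter_le_mul_inner_signedSum hP hinj hle hε h1 j).mp hsum k (mem_univ k)).symm

lemma neg_two_smul_mem_reflClosure (h1 : ⟪signedSum β 1, signedSum β 1⟫ = 1) {j : ι}
    (hj : ⟪signedSum β 1, β j⟫ = 1 / 4) : ReflClosure (signedSums β) (-((2 : ℝ) • β j)) := by
  have hvj : signedSum β (update 1 j (-(1 : ι → ℝ) j)) = signedSum β 1 - (2 : ℝ) • β j := by
    rw [signedSum_update_neg, Pi.one_apply, mul_one]
  have := (ReflClosure.base _ (signedSum_mem_signedSums (β := β) IsSignVector.one)).reflect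
    (ReflClosure.base _ (signedSum_mem_signedSums (IsSignVector.one.update_neg j)))
  convert this using 1
  rw [reflect_of_inner_self_eq_one h1, hvj, inner_sub_right, real_inner_smul_right, h1, hj]
  module

lemma smul_notMem_signedSums (hP : IsSubsystem (signedSums β)) {t : ℝ} (ht : t = 2 ∨ t = -2)
    (j : ι) : t • β j ∉ signedSums β := by
  intro hmem
  obtain ⟨ε, hε, hεt⟩ := hmem
  have hflip := signedSum_mem_signedSums (β := β) (hε.update_neg j)
  rw [signedSum_update_neg, ← hεt, ← sub_smul] at hflip
  have hcases : t - 2 * ε j = 0 ∨ t - 2 * ε j = 2 * t := by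
    rcases hε j with h | h <;> rcases ht with rfl | rfl <;> norm_num [h]
  rcases hcases with h | h
  · rw [h, zero_smul] at hflip
    exact hP.zero_notMem hflip
  · rw [h, mul_smul] at hflip
    rcases hP.eq_one_or_eq_neg_one_of_smul_mem (hεt ▸ signedSum_mem_signedSums hε) hflip
      with h2 | h2 <;> norm_num at h2

/-- The reflection of `signedSum β 1` in the root `-2βⱼ ∉ P` is a unit vector of `P` equal to
`signedSum β 1 - βⱼ / (2 ⟪βⱼ, βⱼ⟫)`; its inner products with the `βₖ` are `±1/4`. -/
lemma inner_eq_zero_or_eq_inner_self (hι : Fintype.card ι = 4)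
    (hP : IsAdmissible (signedSums β)) (hinj : Set.InjOn (signedSum β) {ε | IsSignVector ε})
    (hle : ∀ u ∈ signedSums β, ‖u‖ ≤ 1) (h1 : ‖signedSum β 1‖ = 1) (j k : ι) :
    ⟪β j, β k⟫ = 0 ∨ ⟪β j, β k⟫ = ⟪β j, β j⟫ := by
  set v := signedSum β 1
  have hv : ∀ k, ⟪v, β k⟫ = 1 / 4 := fun k => by
    simpa using mul_inner_signedSum_eq hι hP.1 hinj hle IsSignVector.one h1 k
  have hvv : ⟪v, v⟫ = 1 := by rw [real_inner_self_eq_norm_sq, h1, one_pow]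
  have hβj : ⟪β j, β j⟫ ≠ 0 := by
    rw [inner_self_ne_zero]
    rintro h
    simpa [h] using hv j
  set y := -((2 : ℝ) • β j)
  have hy0 : y ≠ 0 := by simpa [y] using hβj
  have hyP : y ∉ signedSums β := by
    rw [show y = (-2 : ℝ) • β j from (neg_smul _ _).symm]
    exact smul_notMem_signedSums hP.1 (Or.inr rfl) j
  obtain ⟨ε, hε, hr⟩ := hP.reflect_mem (neg_two_smul_mem_reflClosure hvv (hv j)) hyP
    (signedSum_mem_signedSums IsSignVector.one)
  have hr1 : ‖signedSum β ε‖ = 1 := by rw [← hr, norm_reflect hy0, h1]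
  have hrk : ⟪reflect y v, β k⟫ = 1 / 4 - ⟪β j, β k⟫ / (2 * ⟪β j, β j⟫) := by
    simp only [y, reflect, inner_sub_left, inner_neg_left, inner_neg_right, real_inner_smul_left,
      real_inner_smul_right, real_inner_comm v (β j), hv]
    field_simp
    ring
  have hk := mul_inner_signedSum_eq hι hP.1 hinj hle hε hr1 k
  rw [← hr, hrk] at hk
  rcases hε k with h | h <;> rw [h] at hk
  · left
    field_simp at hk
    linarith
  · right
    field_simp at hk
    linarith

lemma inner_eq_ite_of_norm_signedSum_one (hι : Fintype.card ι = 4)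
    (hP : IsAdmissible (signedSums β)) (hcard : (signedSums β).ncard = 16)
    (hle : ∀ u ∈ signedSums β, ‖u‖ ≤ 1) (h1 : ‖signedSum β 1‖ = 1) (i j : ι) :
    ⟪β i, β j⟫ = if i = j then 1 / 4 else 0 := by
  have hinj := injOn_signedSum (β := β) (by rw [hcard, hι]; norm_num)
  have hdich := inner_eq_zero_or_eq_inner_self hι hP hinj hle h1
  have horth : ∀ i j, i ≠ j → ⟪β i, β j⟫ = 0 := by
    intro i j hij
    by_contra hne
    have hi : ⟪β i, β j⟫ = ⟪β i, β i⟫ := (hdich i j).resolve_left hne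
    have hj : ⟪β i, β j⟫ = ⟪β j, β j⟫ := by
      rw [real_inner_comm]
      exact (hdich j i).resolve_left (by rwa [real_inner_comm])
    have hβ : β i = β j := by
      rw [← sub_eq_zero, ← inner_self_eq_zero (𝕜 := ℝ), real_inner_sub_sub_self]
      linarith
    have hflip := hinj (IsSignVector.one.update_neg i) (IsSignVector.one.update_neg j)
      (by rw [signedSum_update_neg, signedSum_update_neg, Pi.one_apply, Pi.one_apply, hβ])
    have := congrFun hflip i
    norm_num [hij] at this
  have hdiag : ∀ j, ⟪β j, β j⟫ = 1 / 4 := by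
    intro j
    have := mul_inner_signedSum_eq hι hP.1 hinj hle IsSignVector.one h1 j
    rwa [Pi.one_apply, one_mul, signedSum, sum_inner,
      sum_eq_single j (fun k _ hkj => by rw [Pi.one_apply, one_smul, horth k j hkj]) (by simp),
      Pi.one_apply, one_smul] at this
  split_ifs with h
  · rw [h, hdiag]
  · exact horth i j h

/-- Multiplying the `βⱼ` by signs does not change `P`, and turns the given unit vector of `P`
into `signedSum β 1`. -/
theorem inner_eq_ite_of_admissible (hι : Fintype.card ι = 4)
    (hP : IsAdmissible (signedSums β)) (hcard : (signedSums β).ncard = 16)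
    (hle : ∀ u ∈ signedSums β, ‖u‖ ≤ 1) (hone : ∃ u ∈ signedSums β, ‖u‖ = 1) (i j : ι) :
    ⟪β i, β j⟫ = if i = j then 1 / 4 else 0 := by
  obtain ⟨-, ⟨s, hs, rfl⟩, h1⟩ := hone
  have hs_eq := signedSums_smul (β := β) hs
  have hsβ := inner_eq_ite_of_norm_signedSum_one (β := s • β) hι (hs_eq ▸ hP) (hs_eq ▸ hcard)
    (hs_eq ▸ hle) (by rwa [signedSum_smul, one_mul]) i j
  rw [Pi.smul_apply', Pi.smul_apply', real_inner_smul_left, real_inner_smul_right] at hsβ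
  split_ifs at hsβ ⊢ with h
  · subst h
    rwa [← mul_assoc, hs.mul_self, one_mul] at hsβ
  · simpa [hs.ne_zero] using hsβ

end Gram

section RootSystemD4

variable {ι : Type*} {β : ι → V}

def doubledVectors (β : ι → V) : Set V := {v | ∃ i, v = (2 : ℝ) • β i ∨ v = -((2 : ℝ) • β i)}

lemma smul_mem_doubledVectors {t : ℝ} (ht : t = 2 ∨ t = -2) (i : ι) :
    t • β i ∈ doubledVectors β := by
  rcases ht with rfl | rfl
  · exact ⟨i, Or.inl rfl⟩
  · exact ⟨i, Or.inr (neg_smul _ _)⟩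

lemma neg_mem_doubledVectors {u : V} (hu : u ∈ doubledVectors β) : -u ∈ doubledVectors β := by
  obtain ⟨i, rfl | rfl⟩ := hu
  · exact ⟨i, Or.inr rfl⟩
  · exact ⟨i, Or.inl (neg_neg _)⟩

variable [DecidableEq ι]

lemma inner_self_two_smul_of_gram (hG : ∀ i j, ⟪β i, β j⟫ = if i = j then 1 / 4 else 0)
    (i : ι) : ⟪(2 : ℝ) • β i, (2 : ℝ) • β i⟫ = 1 := by
  rw [real_inner_smul_left, real_inner_smul_right, hG, if_pos rfl]
  norm_num

lemma two_smul_ne_zero_of_gram (hG : ∀ i j, ⟪β i, β j⟫ = if i = j then 1 / 4 else 0)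
    (i : ι) : (2 : ℝ) • β i ≠ 0 := by
  intro h
  simpa [h] using inner_self_two_smul_of_gram hG i

lemma reflect_two_smul_two_smul_mem (hG : ∀ i j, ⟪β i, β j⟫ = if i = j then 1 / 4 else 0)
    (i k : ι) : reflect ((2 : ℝ) • β i) ((2 : ℝ) • β k) ∈ doubledVectors β := by
  rcases eq_or_ne i k with rfl | hik
  · rw [reflect_self (two_smul_ne_zero_of_gram hG i)]
    exact neg_mem_doubledVectors ⟨i, Or.inl rfl⟩
  · rw [reflect_of_inner_eq_zero (by simp [real_inner_smul_left, real_inner_smul_right, hG, hik])]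
    exact ⟨k, Or.inl rfl⟩

variable [Fintype ι]

lemma inner_signedSum_left_of_gram (hG : ∀ i j, ⟪β i, β j⟫ = if i = j then 1 / 4 else 0)
    (ε : ι → ℝ) (k : ι) : ⟪signedSum β ε, β k⟫ = ε k / 4 := by
  simp [signedSum, sum_inner, real_inner_smul_left, hG, div_eq_mul_inv]

lemma inner_signedSum_signedSum_of_gram (hG : ∀ i j, ⟪β i, β j⟫ = if i = j then 1 / 4 else 0)
    (a c : ι → ℝ) : ⟪signedSum β a, signedSum β c⟫ = (∑ j, a j * c j) / 4 := by
  simp only [inner_signedSum_right, inner_signedSum_left_of_gram hG, sum_div]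
  exact sum_congr rfl fun j _ => by ring

lemma inner_self_signedSum_of_gram (hι : Fintype.card ι = 4)
    (hG : ∀ i j, ⟪β i, β j⟫ = if i = j then 1 / 4 else 0) {ε : ι → ℝ} (hε : IsSignVector ε) :
    ⟪signedSum β ε, signedSum β ε⟫ = 1 := by
  rw [inner_signedSum_signedSum_of_gram hG, sum_congr rfl fun j _ => hε.mul_self j, sum_const,
    card_univ, hι]
  norm_num

lemma signedSum_sub_mem_doubledVectors (hι : Fintype.card ι = 4)
    (hG : ∀ i j, ⟪β i, β j⟫ = if i = j then 1 / 4 else 0) {a c : ι → ℝ} (ha : IsSignVector a)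
    (hc : IsSignVector c) (h : ⟪signedSum β a, signedSum β c⟫ = 1 / 2) :
    signedSum β c - signedSum β a ∈ doubledVectors β := by
  rw [inner_signedSum_signedSum_of_gram hG] at h
  obtain ⟨i, rfl⟩ := ha.exists_eq_update_neg hc (by rw [hι]; push_cast; linarith)
  rw [signedSum_update_neg, sub_sub_cancel_left, ← neg_smul]
  exact smul_mem_doubledVectors (by rcases ha i with h | h <;> norm_num [h]) i

lemma reflect_signedSum_signedSum_mem (hι : Fintype.card ι = 4)
    (hG : ∀ i j, ⟪β i, β j⟫ = if i = j then 1 / 4 else 0) (hP : IsSubsystem (signedSums β))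
    {a c : ι → ℝ} (ha : IsSignVector a) (hc : IsSignVector c) :
    reflect (signedSum β a) (signedSum β c) ∈ signedSums β ∪ doubledVectors β := by
  have hα1 := inner_self_signedSum_of_gram hι hG ha
  have hnα : ‖signedSum β a‖ = 1 := by rw [norm_eq_sqrt_real_inner, hα1, Real.sqrt_one]
  have hnw : ‖signedSum β c‖ = 1 := by
    rw [norm_eq_sqrt_real_inner, inner_self_signedSum_of_gram hι hG hc, Real.sqrt_one]
  obtain ⟨n, hn⟩ := hP.exists_int (signedSum_mem_signedSums ha) (signedSum_mem_signedSums hc)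
  rw [hα1, div_one] at hn
  have hbound := abs_real_inner_le_norm (signedSum β a) (signedSum β c)
  rw [hnα, hnw, mul_one, abs_le] at hbound
  have hlo : -2 ≤ n := by exact_mod_cast (show (-2 : ℝ) ≤ n by linarith)
  have hhi : n ≤ 2 := by exact_mod_cast (show (n : ℝ) ≤ 2 by linarith)
  rw [reflect_of_inner_self_eq_one hα1, hn]
  interval_cases n
  · have hαw : signedSum β a = -signedSum β c :=
      (inner_eq_neg_one_iff_of_norm_eq_one (𝕜 := ℝ) hnα hnw).mp (by push_cast at hn; linarith)
    refine Or.inl ?_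
    rw [hαw]
    convert neg_mem_signedSums (signedSum_mem_signedSums hc) using 1
    push_cast
    module
  · right
    have := signedSum_sub_mem_doubledVectors hι hG ha.neg hc
      (by rw [signedSum_neg, inner_neg_left]; push_cast at hn; linarith)
    rw [signedSum_neg] at this
    convert this using 1
    push_cast
    module
  · exact Or.inl (by simpa using signedSum_mem_signedSums hc)
  · right
    convert signedSum_sub_mem_doubledVectors hι hG ha hc (by push_cast at hn; linarith) using 1
    push_cast
    module
  · have hαw : signedSum β a = signedSum β c :=
      (inner_eq_one_iff_of_norm_eq_one (𝕜 := ℝ) hnα hnw).mp (by push_cast at hn; linarith)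
    refine Or.inl ?_
    rw [hαw]
    convert neg_mem_signedSums (signedSum_mem_signedSums hc) using 1
    push_cast
    module

lemma reflect_signedSum_two_smul_mem (hι : Fintype.card ι = 4)
    (hG : ∀ i j, ⟪β i, β j⟫ = if i = j then 1 / 4 else 0) {a : ι → ℝ} (ha : IsSignVector a) (k : ι) :
    reflect (signedSum β a) ((2 : ℝ) • β k) ∈ signedSums β := by
  have hflip := signedSum_mem_signedSums (β := β) (ha.update_neg k)
  rw [reflect_of_inner_self_eq_one (inner_self_signedSum_of_gram hι hG ha),
    real_inner_smul_right, inner_signedSum_left_of_gram hG]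
  rw [signedSum_update_neg] at hflip
  rcases ha k with h | h <;> rw [h] at hflip ⊢
  · convert neg_mem_signedSums hflip using 1
    module
  · convert hflip using 1
    module

lemma reflect_two_smul_signedSum_mem (hG : ∀ i j, ⟪β i, β j⟫ = if i = j then 1 / 4 else 0)
    {c : ι → ℝ} (hc : IsSignVector c) (i : ι) :
    reflect ((2 : ℝ) • β i) (signedSum β c) ∈ signedSums β := by
  convert signedSum_mem_signedSums (β := β) (hc.update_neg i) using 1
  rw [reflect_of_inner_self_eq_one (inner_self_two_smul_of_gram hG i), real_inner_smul_left,
    real_inner_comm, inner_signedSum_left_of_gram hG, signedSum_update_neg]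
  module

lemma reflect_mem_signedSums_union (hι : Fintype.card ι = 4)
    (hG : ∀ i j, ⟪β i, β j⟫ = if i = j then 1 / 4 else 0) (hP : IsSubsystem (signedSums β))
    {α w : V} (hα : α ∈ signedSums β ∪ doubledVectors β)
    (hw : w ∈ signedSums β ∪ doubledVectors β) :
    reflect α w ∈ signedSums β ∪ doubledVectors β := by
  have hneg : ∀ u ∈ signedSums β ∪ doubledVectors β, -u ∈ signedSums β ∪ doubledVectors β := by
    rintro u (hu | hu)
    exacts [Or.inl (neg_mem_signedSums hu), Or.inr (neg_mem_doubledVectors hu)]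
  rcases hα with ⟨a, ha, rfl⟩ | ⟨i, rfl | rfl⟩ <;> rcases hw with ⟨c, hc, rfl⟩ | ⟨k, rfl | rfl⟩
  · exact reflect_signedSum_signedSum_mem hι hG hP ha hc
  · exact Or.inl (reflect_signedSum_two_smul_mem hι hG ha k)
  · rw [reflect_neg_right]
    exact hneg _ (Or.inl (reflect_signedSum_two_smul_mem hι hG ha k))
  · exact Or.inl (reflect_two_smul_signedSum_mem hG hc i)
  · exact Or.inr (reflect_two_smul_two_smul_mem hG i k)
  · rw [reflect_neg_right]
    exact hneg _ (Or.inr (reflect_two_smul_two_smul_mem hG i k))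
  · rw [reflect_neg_left]
    exact Or.inl (reflect_two_smul_signedSum_mem hG hc i)
  · rw [reflect_neg_left]
    exact Or.inr (reflect_two_smul_two_smul_mem hG i k)
  · rw [reflect_neg_left, reflect_neg_right]
    exact hneg _ (Or.inr (reflect_two_smul_two_smul_mem hG i k))

theorem reflClosure_signedSums_eq (hι : Fintype.card ι = 4) (hP : IsSubsystem (signedSums β))
    (hG : ∀ i j, ⟪β i, β j⟫ = if i = j then 1 / 4 else 0) :
    {v | ReflClosure (signedSums β) v} = signedSums β ∪ doubledVectors β := by
  ext u
  constructor
  · intro hu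
    induction hu with
    | base v hv => exact Or.inl hv
    | refl α v _ _ hα hv => exact reflect_mem_signedSums_union hι hG hP hα hv
  · have hneg2 : ∀ i, ReflClosure (signedSums β) (-((2 : ℝ) • β i)) := fun i =>
      neg_two_smul_mem_reflClosure (inner_self_signedSum_of_gram hι hG IsSignVector.one)
        (by rw [inner_signedSum_left_of_gram hG, Pi.one_apply])
    rintro (hu | ⟨i, rfl | rfl⟩)
    · exact ReflClosure.base u hu
    · have := (hneg2 i).neg (neg_ne_zero.mpr (two_smul_ne_zero_of_gram hG i))
      rwa [neg_neg] at this
    · exact hneg2 i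

theorem reflClosure_signedSums_diff_eq (hι : Fintype.card ι = 4)
    (hP : IsSubsystem (signedSums β)) (hG : ∀ i j, ⟪β i, β j⟫ = if i = j then 1 / 4 else 0) :
    {v | ReflClosure (signedSums β) v} \ signedSums β = doubledVectors β := by
  rw [reflClosure_signedSums_eq hι hP hG, Set.union_sdiff_left, sdiff_eq_left,
    Set.disjoint_left]
  rintro u ⟨i, rfl | rfl⟩
  · exact smul_notMem_signedSums hP (Or.inl rfl) i
  · rw [← neg_smul]
    exact smul_notMem_signedSums hP (Or.inr rfl) i

end RootSystemD4

/-- If `P = {∑_{j=1}^4 εⱼβⱼ}` is an admissible subsystem of roots with 16 elements and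
maximal norm `1`, then up to permutation and sign changes the Gram matrix is `(1/4)·Id₄`,
the minimal root system `P̄` containing `P` is `P ∪ {±2βᵢ}` (the root system of `so(8)`),
and `P̄ \ P = {±2βᵢ}` (the root system of `so(4) ⊕ so(4)`). -/
theorem stmt_13 (β : Fin 4 → V) (P : Set V)
    (hPdef : P = {v : V | ∃ ε : Fin 4 → ℝ,
      (∀ j, ε j = 1 ∨ ε j = -1) ∧ v = ∑ j, ε j • β j})
    (hP : IsAdmissible P) (hcard : P.ncard = 16)
    (hmax : ∀ v ∈ P, ‖v‖ ≤ 1) (hone : ∃ v ∈ P, ‖v‖ = 1) :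
    (∃ (σ : Equiv.Perm (Fin 4)) (s : Fin 4 → ℝ), (∀ j, s j = 1 ∨ s j = -1) ∧
      (∀ i j, ⟪s i • β (σ i), s j • β (σ j)⟫ = if i = j then 1/4 else 0)) ∧
    {v : V | ReflClosure P v} =
      P ∪ {v : V | ∃ i, v = (2 : ℝ) • β i ∨ v = -((2 : ℝ) • β i)} ∧
    {v : V | ReflClosure P v} \ P =
      {v : V | ∃ i, v = (2 : ℝ) • β i ∨ v = -((2 : ℝ) • β i)} := by
  obtain rfl : P = signedSums β := hPdef
  have hι : Fintype.card (Fin 4) = 4 := Fintype.card_fin 4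
  have hG := inner_eq_ite_of_admissible hι hP hcard hmax hone
  exact ⟨⟨1, 1, IsSignVector.one, fun i j => by simpa using hG i j⟩,
    reflClosure_signedSums_eq hι hP.1 hG, reflClosure_signedSums_diff_eq hι hP.1 hG⟩
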